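/- arXiv:0901.1892 — 2 statements merged into one kernel-verified Lean document; each statement's English description precedes it below -/
import Mathlib

section
/- Let (S̃, X̃₁, X̃₂, U, A, B, X₁, X₂, Y) be discrete random variables satisfying the Markov chain (S̃, X̃₁, X̃₂) → (U,A,B) → (X₁,X₂) → Y, where additionally (S̃, X̃₁, X̃₂) has the same marginal distribution as (S, X₁, X₂) with S = (U,A,B,Y). Then I(X₂; Y | U A B X₁) + I(X̃₂ B; Y | S̃ X̃₁ U A X₁) = I(X₂; Y | U A X₁ X̃₁ S̃). -/
open scoped BigOperators

namespace MACFB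

variable {Ω : Type*} [Fintype Ω]

/-- `p` is a probability mass function on the finite set `Ω`. -/
def IsPMF (p : Ω → ℝ) : Prop := (∀ ω, 0 ≤ p ω) ∧ ∑ ω, p ω = 1

/-- Probability that the random variable `X` takes the value `a`. -/
noncomputable def pr {α : Type*} [DecidableEq α] (p : Ω → ℝ) (X : Ω → α) (a : α) : ℝ :=
  ∑ ω, if X ω = a then p ω else 0

/-- Shannon entropy of the random variable `X` under `p`. -/
noncomputable def ent {α : Type*} [Fintype α] [DecidableEq α] (p : Ω → ℝ) (X : Ω → α) : ℝ :=
  ∑ a, Real.negMulLog (pr p X a)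

/-- Conditional entropy `H(X | Z)`. -/
noncomputable def condEnt {α γ : Type*} [Fintype α] [DecidableEq α] [Fintype γ] [DecidableEq γ]
    (p : Ω → ℝ) (X : Ω → α) (Z : Ω → γ) : ℝ :=
  ent p (fun ω => (X ω, Z ω)) - ent p Z

/-- Conditional mutual information `I(X ; Y | Z)`. -/
noncomputable def condMI {α β γ : Type*} [Fintype α] [DecidableEq α] [Fintype β] [DecidableEq β]
    [Fintype γ] [DecidableEq γ] (p : Ω → ℝ) (X : Ω → α) (Y : Ω → β) (Z : Ω → γ) : ℝ :=
  ent p (fun ω => (X ω, Z ω)) + ent p (fun ω => (Y ω, Z ω))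
    - ent p (fun ω => (X ω, Y ω, Z ω)) - ent p Z

/-- `X` and `Y` are conditionally independent given `Z` (under `p`). -/
def CondIndep {α β γ : Type*} [DecidableEq α] [DecidableEq β] [DecidableEq γ]
    (p : Ω → ℝ) (X : Ω → α) (Y : Ω → β) (Z : Ω → γ) : Prop :=
  ∀ (x : α) (y : β) (z : γ),
    pr p Z z * pr p (fun ω => (X ω, Y ω, Z ω)) (x, y, z) =
      pr p (fun ω => (X ω, Z ω)) (x, z) * pr p (fun ω => (Y ω, Z ω)) (y, z)

end MACFB

open MACFB

set_option synthInstance.maxSize 512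
set_option synthInstance.maxHeartbeats 400000
set_option synthInstance.maxSize 4096
set_option synthInstance.maxHeartbeats 4000000
set_option maxHeartbeats 2000000

section Aux
variable {Ω : Type*} [Fintype Ω]

lemma pr_nonneg {α : Type*} [DecidableEq α] {p : Ω → ℝ} (hp : ∀ ω, 0 ≤ p ω)
    (X : Ω → α) (a : α) : 0 ≤ pr p X a := by
  unfold pr; apply Finset.sum_nonneg; intro ω _
  split
  · exact hp ω
  · exact le_refl 0

lemma pr_congr {α β : Type*} [DecidableEq α] [DecidableEq β] (p : Ω → ℝ) {F : Ω → α} {G : Ω → β}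
    {a : α} {b : β} (h : ∀ ω, F ω = a ↔ G ω = b) : pr p F a = pr p G b := by
  unfold pr; exact Finset.sum_congr rfl fun ω _ => if_congr (h ω) rfl rfl

lemma pr_mono {α β : Type*} [DecidableEq α] [DecidableEq β] {p : Ω → ℝ} (hp : ∀ ω, 0 ≤ p ω)
    {F : Ω → α} {G : Ω → β} {a : α} {b : β} (h : ∀ ω, F ω = a → G ω = b) :
    pr p F a ≤ pr p G b := by
  unfold pr; apply Finset.sum_le_sum; intro ω _
  by_cases hF : F ω = a
  · simp [hF, h ω hF]
  · rw [if_neg hF]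
    split
    · exact hp ω
    · exact le_refl 0

lemma pr_eq_zero {α : Type*} [DecidableEq α] (p : Ω → ℝ) {F : Ω → α} {a : α}
    (h : ∀ ω, F ω ≠ a) : pr p F a = 0 := by
  unfold pr; simp [h]

lemma pr_sum_fst {α β : Type*} [Fintype α] [DecidableEq α] [DecidableEq β] (p : Ω → ℝ)
    (X : Ω → α) (G : Ω → β) (b : β) :
    ∑ a, pr p (fun ω => (X ω, G ω)) (a, b) = pr p G b := by
  unfold pr
  rw [Finset.sum_comm]
  refine Finset.sum_congr rfl fun ω _ => ?_
  by_cases h : G ω = b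
  · simp [Prod.ext_iff, h]
  · simp [Prod.ext_iff, h]

lemma pr_fiber {α β : Type*} [Fintype α] [DecidableEq α] [DecidableEq β] (p : Ω → ℝ)
    (V : Ω → α) (f : α → β) (b : β) :
    pr p (fun ω => f (V ω)) b = ∑ a, if f a = b then pr p V a else 0 := by
  unfold pr
  have e : ∀ a, (if f a = b then ∑ ω, if V ω = a then p ω else 0 else 0)
      = ∑ ω, if V ω = a then (if f a = b then p ω else 0) else 0 := by
    intro a; by_cases h1 : f a = b <;> simp [h1]
  rw [Finset.sum_congr rfl fun a _ => e a, Finset.sum_comm]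
  refine Finset.sum_congr rfl fun ω _ => ?_
  simp

lemma ent_congr {α β : Type*} [Fintype α] [DecidableEq α] [Fintype β] [DecidableEq β]
    (p : Ω → ℝ) {V : Ω → α} {W : Ω → β} (f : α → β) (g : β → α) (hgf : ∀ a, g (f a) = a)
    (hW : ∀ ω, W ω = f (V ω)) : ent p W = ent p V := by
  have hinj : Function.Injective f := Function.LeftInverse.injective hgf
  unfold ent
  rw [← Finset.sum_subset (Finset.subset_univ ((Finset.univ : Finset α).image f))
    (fun b _ hb => ?_)]
  · rw [Finset.sum_image (fun a _ a' _ hh => hinj hh)]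
    refine Finset.sum_congr rfl fun a _ => ?_
    congr 1
    refine pr_congr p fun ω => ?_
    constructor
    · intro h; exact hinj (by rw [← hW ω, h])
    · intro h; rw [hW ω, h]
  · have hz : pr p W b = 0 := pr_eq_zero p fun ω hωb => by
      exact hb (by rw [← hωb, hW ω]; exact Finset.mem_image_of_mem f (Finset.mem_univ _))
    rw [hz]; exact Real.negMulLog_zero

end Aux

section CI
variable {Ω : Type*} [Fintype Ω]

lemma condIndep_symm {α β γ : Type*} [DecidableEq α] [DecidableEq β] [DecidableEq γ]
    {p : Ω → ℝ} {X : Ω → α} {Y : Ω → β} {Z : Ω → γ} (h : CondIndep p X Y Z) :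
    CondIndep p Y X Z := by
  intro y x z
  have e : pr p (fun ω => (Y ω, X ω, Z ω)) (y, x, z)
      = pr p (fun ω => (X ω, Y ω, Z ω)) (x, y, z) :=
    pr_congr p fun ω => by simp [Prod.ext_iff]; tauto
  rw [e, h x y z]; ring

lemma condIndep_comp_right {α β β' γ : Type*} [Fintype α] [Fintype β] [Fintype γ]
    [DecidableEq α] [DecidableEq β]
    [DecidableEq β'] [DecidableEq γ] {p : Ω → ℝ} {X : Ω → α} {Y : Ω → β} {Z : Ω → γ}
    (g : β → β') (h : CondIndep p X Y Z) :
    CondIndep p X (fun ω => g (Y ω)) Z := by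
  intro x y' z
  have e1 : pr p (fun ω => (X ω, g (Y ω), Z ω)) (x, y', z)
      = ∑ y, if g y = y' then pr p (fun ω => (X ω, Y ω, Z ω)) (x, y, z) else 0 := by
    have := pr_fiber p (fun ω => (X ω, Y ω, Z ω)) (fun t => (t.1, g t.2.1, t.2.2)) (x, y', z)
    rw [show (fun ω => (X ω, g (Y ω), Z ω))
        = (fun ω => ((fun t : α × β × γ => (t.1, g t.2.1, t.2.2)) (X ω, Y ω, Z ω))) from rfl, this]
    rw [Fintype.sum_prod_type]
    rw [Finset.sum_congr rfl fun a _ => Fintype.sum_prod_type _]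
    simp [Prod.ext_iff, ite_and, Finset.sum_ite_eq, Finset.sum_ite_eq']
  have e2 : pr p (fun ω => (g (Y ω), Z ω)) (y', z)
      = ∑ y, if g y = y' then pr p (fun ω => (Y ω, Z ω)) (y, z) else 0 := by
    have := pr_fiber p (fun ω => (Y ω, Z ω)) (fun t => (g t.1, t.2)) (y', z)
    rw [show (fun ω => (g (Y ω), Z ω))
        = (fun ω => ((fun t : β × γ => (g t.1, t.2)) (Y ω, Z ω))) from rfl, this]
    rw [Fintype.sum_prod_type]
    simp [Prod.ext_iff, ite_and, Finset.sum_ite_eq, Finset.sum_ite_eq']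
  rw [e1, e2, Finset.mul_sum, Finset.mul_sum]
  refine Finset.sum_congr rfl fun y _ => ?_
  by_cases hg : g y = y'
  · simp only [hg, if_true]
    exact h x y z
  · simp [hg]

lemma condIndep_comp_left {α α' β γ : Type*} [Fintype α] [Fintype β] [Fintype γ]
    [DecidableEq α] [DecidableEq α']
    [DecidableEq β] [DecidableEq γ] {p : Ω → ℝ} {X : Ω → α} {Y : Ω → β} {Z : Ω → γ}
    (g : α → α') (h : CondIndep p X Y Z) :
    CondIndep p (fun ω => g (X ω)) Y Z :=
  condIndep_symm (condIndep_comp_right g (condIndep_symm h))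

lemma condIndep_weakUnion {α β δ γ : Type*} [Fintype α] [Fintype β] [Fintype δ] [Fintype γ]
    [DecidableEq α]
    [DecidableEq β] [DecidableEq δ] [DecidableEq γ] {p : Ω → ℝ} (hp : ∀ ω, 0 ≤ p ω)
    {X : Ω → α} {Y : Ω → β} {W : Ω → δ} {Z : Ω → γ}
    (h : CondIndep p X (fun ω => (Y ω, W ω)) Z) :
    CondIndep p X Y (fun ω => (W ω, Z ω)) := by
  rintro x y ⟨w, z⟩
  have h1 := h x (y, w) z
  have h2 := (condIndep_comp_right (fun t : β × δ => t.2) h) x w z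
  dsimp only at h2
  have r1 : pr p (fun ω => (X ω, (Y ω, W ω), Z ω)) (x, (y, w), z)
      = pr p (fun ω => (X ω, Y ω, W ω, Z ω)) (x, y, w, z) :=
    pr_congr p fun ω => by simp [Prod.ext_iff]; tauto
  have r2 : pr p (fun ω => ((Y ω, W ω), Z ω)) ((y, w), z)
      = pr p (fun ω => (Y ω, W ω, Z ω)) (y, w, z) :=
    pr_congr p fun ω => by simp [Prod.ext_iff]; tauto
  rw [r1, r2] at h1
  -- goal: pr (W,Z) * pr (X,Y,W,Z) = pr (X,W,Z) * pr (Y,W,Z)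
  rcases eq_or_lt_of_le (pr_nonneg hp Z z) with h0 | hzpos
  · have hwz : pr p (fun ω => (W ω, Z ω)) (w, z) = 0 := by
      refine le_antisymm ?_ (pr_nonneg hp _ _)
      rw [h0]
      exact pr_mono hp fun ω hω => by simp [Prod.ext_iff] at hω; exact hω.2
    have hxwz : pr p (fun ω => (X ω, W ω, Z ω)) (x, w, z) = 0 := by
      refine le_antisymm ?_ (pr_nonneg hp _ _)
      rw [h0]
      exact pr_mono hp fun ω hω => by simp [Prod.ext_iff] at hω; exact hω.2.2
    rw [hwz, hxwz]; ring
  · apply mul_left_cancel₀ (ne_of_gt hzpos)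
    calc pr p Z z * (pr p (fun ω => (W ω, Z ω)) (w, z)
          * pr p (fun ω => (X ω, Y ω, (W ω, Z ω))) (x, y, w, z))
        = pr p (fun ω => (W ω, Z ω)) (w, z)
          * (pr p Z z * pr p (fun ω => (X ω, Y ω, W ω, Z ω)) (x, y, w, z)) := by ring
      _ = pr p (fun ω => (W ω, Z ω)) (w, z) * (pr p (fun ω => (X ω, Z ω)) (x, z)
          * pr p (fun ω => (Y ω, W ω, Z ω)) (y, w, z)) := by rw [h1]
      _ = (pr p (fun ω => (X ω, Z ω)) (x, z) * pr p (fun ω => (W ω, Z ω)) (w, z))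
          * pr p (fun ω => (Y ω, W ω, Z ω)) (y, w, z) := by ring
      _ = (pr p Z z * pr p (fun ω => (X ω, W ω, Z ω)) (x, w, z))
          * pr p (fun ω => (Y ω, W ω, Z ω)) (y, w, z) := by rw [h2]
      _ = pr p Z z * (pr p (fun ω => (X ω, (W ω, Z ω))) (x, w, z)
          * pr p (fun ω => (Y ω, (W ω, Z ω))) (y, w, z)) := by ring

lemma condIndep_contraction {α β γ δ : Type*} [Fintype α] [Fintype δ] [DecidableEq α] [Fintype β] [DecidableEq β]
    [Fintype γ] [DecidableEq γ] [DecidableEq δ] {p : Ω → ℝ} (hp : ∀ ω, 0 ≤ p ω)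
    {V : Ω → α} {T : Ω → β} {C : Ω → γ} {Y : Ω → δ}
    (h1 : CondIndep p V T C)
    (h2 : CondIndep p Y (fun ω => (T ω, C ω)) V) :
    CondIndep p (fun ω => (V ω, Y ω)) T C := by
  rintro ⟨v, y⟩ t c
  have h2' := (condIndep_comp_right (fun tc : β × γ => tc.2) h2) y c v
  dsimp only at h2'
  have h2a := h2 y (t, c) v
  have h1a := h1 v t c
  have e1 : pr p (fun ω => ((V ω, Y ω), T ω, C ω)) ((v, y), t, c)
      = pr p (fun ω => (Y ω, (T ω, C ω), V ω)) (y, (t, c), v) :=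
    pr_congr p fun ω => by simp [Prod.ext_iff]; tauto
  have e2 : pr p (fun ω => ((T ω, C ω), V ω)) ((t, c), v)
      = pr p (fun ω => (V ω, T ω, C ω)) (v, t, c) :=
    pr_congr p fun ω => by simp [Prod.ext_iff]; tauto
  have e3 : pr p (fun ω => ((V ω, Y ω), C ω)) ((v, y), c)
      = pr p (fun ω => (Y ω, C ω, V ω)) (y, c, v) :=
    pr_congr p fun ω => by simp [Prod.ext_iff]; tauto
  have e4 : pr p (fun ω => (C ω, V ω)) (c, v) = pr p (fun ω => (V ω, C ω)) (v, c) :=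
    pr_congr p fun ω => by simp [Prod.ext_iff]; tauto
  rw [e2] at h2a
  rw [e4] at h2'
  rcases eq_or_lt_of_le (pr_nonneg hp V v) with h0 | hvpos
  · have z1 : pr p (fun ω => ((V ω, Y ω), T ω, C ω)) ((v, y), t, c) = 0 := by
      refine le_antisymm ?_ (pr_nonneg hp _ _)
      rw [h0]
      exact pr_mono hp fun ω hω => by simp [Prod.ext_iff] at hω; exact hω.1.1
    have z2 : pr p (fun ω => ((V ω, Y ω), C ω)) ((v, y), c) = 0 := by
      refine le_antisymm ?_ (pr_nonneg hp _ _)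
      rw [h0]
      exact pr_mono hp fun ω hω => by simp [Prod.ext_iff] at hω; exact hω.1.1
    rw [z1, z2]; ring
  · apply mul_left_cancel₀ (ne_of_gt hvpos)
    calc pr p V v * (pr p C c * pr p (fun ω => ((V ω, Y ω), T ω, C ω)) ((v, y), t, c))
        = pr p C c * (pr p V v * pr p (fun ω => (Y ω, (T ω, C ω), V ω)) (y, (t, c), v)) := by
          rw [e1]; ring
      _ = pr p C c * (pr p (fun ω => (Y ω, V ω)) (y, v)
          * pr p (fun ω => (V ω, T ω, C ω)) (v, t, c)) := by rw [h2a]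
      _ = pr p (fun ω => (Y ω, V ω)) (y, v)
          * (pr p C c * pr p (fun ω => (V ω, T ω, C ω)) (v, t, c)) := by ring
      _ = pr p (fun ω => (Y ω, V ω)) (y, v)
          * (pr p (fun ω => (V ω, C ω)) (v, c) * pr p (fun ω => (T ω, C ω)) (t, c)) := by rw [h1a]
      _ = (pr p (fun ω => (Y ω, V ω)) (y, v) * pr p (fun ω => (V ω, C ω)) (v, c))
          * pr p (fun ω => (T ω, C ω)) (t, c) := by ring
      _ = (pr p V v * pr p (fun ω => (Y ω, C ω, V ω)) (y, c, v))
          * pr p (fun ω => (T ω, C ω)) (t, c) := by rw [h2']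
      _ = pr p V v * (pr p (fun ω => ((V ω, Y ω), C ω)) ((v, y), c)
          * pr p (fun ω => (T ω, C ω)) (t, c)) := by rw [e3]; ring

end CI

section EntL
open Real
variable {Ω : Type*} [Fintype Ω]

lemma ent_condIndep {α β γ : Type*} [Fintype α] [DecidableEq α] [Fintype β] [DecidableEq β]
    [Fintype γ] [DecidableEq γ] (p : Ω → ℝ) (hp : IsPMF p)
    (X : Ω → α) (Y : Ω → β) (Z : Ω → γ) (h : CondIndep p X Y Z) :
    ent p (fun ω => (X ω, Y ω, Z ω)) + ent p Z
      = ent p (fun ω => (X ω, Z ω)) + ent p (fun ω => (Y ω, Z ω)) := by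
  obtain ⟨hp0, -⟩ := hp
  have m1 : ∀ x z, ∑ y, pr p (fun ω => (X ω, Y ω, Z ω)) (x, y, z)
      = pr p (fun ω => (X ω, Z ω)) (x, z) := by
    intro x z
    have e : ∀ y, pr p (fun ω => (X ω, Y ω, Z ω)) (x, y, z)
        = pr p (fun ω => (Y ω, (X ω, Z ω))) (y, (x, z)) :=
      fun y => pr_congr p fun ω => by simp [Prod.ext_iff]; tauto
    rw [Finset.sum_congr rfl fun y _ => e y]
    exact pr_sum_fst p Y (fun ω => (X ω, Z ω)) (x, z)
  have m2 : ∀ y z, ∑ x, pr p (fun ω => (X ω, Y ω, Z ω)) (x, y, z)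
      = pr p (fun ω => (Y ω, Z ω)) (y, z) :=
    fun y z => pr_sum_fst p X (fun ω => (Y ω, Z ω)) (y, z)
  have mz : ∀ z, ∑ x, pr p (fun ω => (X ω, Z ω)) (x, z) = pr p Z z :=
    fun z => pr_sum_fst p X Z z
  have key : ∀ x y z, negMulLog (pr p (fun ω => (X ω, Y ω, Z ω)) (x, y, z))
      = -(pr p (fun ω => (X ω, Y ω, Z ω)) (x, y, z)
          * Real.log (pr p (fun ω => (X ω, Z ω)) (x, z)))
        + -(pr p (fun ω => (X ω, Y ω, Z ω)) (x, y, z)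
          * Real.log (pr p (fun ω => (Y ω, Z ω)) (y, z)))
        + pr p (fun ω => (X ω, Y ω, Z ω)) (x, y, z) * Real.log (pr p Z z) := by
    intro x y z
    rcases eq_or_lt_of_le (pr_nonneg hp0 (fun ω => (X ω, Y ω, Z ω)) (x, y, z)) with h0 | hpos
    · rw [← h0]; simp [Real.negMulLog]
    · have hxz : 0 < pr p (fun ω => (X ω, Z ω)) (x, z) := by
        refine lt_of_lt_of_le hpos ?_
        rw [← m1 x z]
        exact Finset.single_le_sum
          (f := fun i => pr p (fun ω => (X ω, Y ω, Z ω)) (x, i, z))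
          (fun i _ => pr_nonneg hp0 _ _) (Finset.mem_univ y)
      have hyz : 0 < pr p (fun ω => (Y ω, Z ω)) (y, z) := by
        refine lt_of_lt_of_le hpos ?_
        rw [← m2 y z]
        exact Finset.single_le_sum
          (f := fun i => pr p (fun ω => (X ω, Y ω, Z ω)) (i, y, z))
          (fun i _ => pr_nonneg hp0 _ _) (Finset.mem_univ x)
      have hz : 0 < pr p Z z := by
        refine lt_of_lt_of_le hxz ?_
        rw [← mz z]
        exact Finset.single_le_sum
          (f := fun i => pr p (fun ω => (X ω, Z ω)) (i, z))
          (fun i _ => pr_nonneg hp0 _ _) (Finset.mem_univ x)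
      have hrel := h x y z
      have hq : pr p (fun ω => (X ω, Y ω, Z ω)) (x, y, z)
          = pr p (fun ω => (X ω, Z ω)) (x, z) * pr p (fun ω => (Y ω, Z ω)) (y, z) / pr p Z z := by
        field_simp
        linarith [hrel]
      have hlog : Real.log (pr p (fun ω => (X ω, Y ω, Z ω)) (x, y, z))
          = Real.log (pr p (fun ω => (X ω, Z ω)) (x, z))
            + Real.log (pr p (fun ω => (Y ω, Z ω)) (y, z)) - Real.log (pr p Z z) := by
        rw [hq, Real.log_div (by positivity) (ne_of_gt hz),
          Real.log_mul (ne_of_gt hxz) (ne_of_gt hyz)]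
      rw [Real.negMulLog, hlog]; ring
  have expand3 : ent p (fun ω => (X ω, Y ω, Z ω))
      = ∑ x, ∑ y, ∑ z, negMulLog (pr p (fun ω => (X ω, Y ω, Z ω)) (x, y, z)) := by
    rw [ent, Fintype.sum_prod_type]
    exact Finset.sum_congr rfl fun x _ => Fintype.sum_prod_type _
  have expandXZ : ent p (fun ω => (X ω, Z ω))
      = ∑ x, ∑ z, negMulLog (pr p (fun ω => (X ω, Z ω)) (x, z)) := by
    rw [ent, Fintype.sum_prod_type]
  have expandYZ : ent p (fun ω => (Y ω, Z ω))
      = ∑ y, ∑ z, negMulLog (pr p (fun ω => (Y ω, Z ω)) (y, z)) := by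
    rw [ent, Fintype.sum_prod_type]
  have A : ∑ x, ∑ y, ∑ z, -(pr p (fun ω => (X ω, Y ω, Z ω)) (x, y, z)
        * Real.log (pr p (fun ω => (X ω, Z ω)) (x, z)))
      = ent p (fun ω => (X ω, Z ω)) := by
    rw [expandXZ]
    refine Finset.sum_congr rfl fun x _ => ?_
    rw [Finset.sum_comm]
    refine Finset.sum_congr rfl fun z _ => ?_
    rw [Finset.sum_neg_distrib, ← Finset.sum_mul, m1 x z, Real.negMulLog]
    ring
  have B : ∑ x, ∑ y, ∑ z, -(pr p (fun ω => (X ω, Y ω, Z ω)) (x, y, z)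
        * Real.log (pr p (fun ω => (Y ω, Z ω)) (y, z)))
      = ent p (fun ω => (Y ω, Z ω)) := by
    rw [expandYZ, Finset.sum_comm]
    refine Finset.sum_congr rfl fun y _ => ?_
    rw [Finset.sum_comm]
    refine Finset.sum_congr rfl fun z _ => ?_
    rw [Finset.sum_neg_distrib, ← Finset.sum_mul, m2 y z, Real.negMulLog]
    ring
  have Csum : ∑ x, ∑ y, ∑ z, pr p (fun ω => (X ω, Y ω, Z ω)) (x, y, z) * Real.log (pr p Z z)
      = -(ent p Z) := by
    have swap1 : ∀ x, ∑ y, ∑ z, pr p (fun ω => (X ω, Y ω, Z ω)) (x, y, z) * Real.log (pr p Z z)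
        = ∑ z, (∑ y, pr p (fun ω => (X ω, Y ω, Z ω)) (x, y, z)) * Real.log (pr p Z z) := by
      intro x
      rw [Finset.sum_comm]
      exact Finset.sum_congr rfl fun z _ => (Finset.sum_mul _ _ _).symm
    rw [Finset.sum_congr rfl fun x _ => swap1 x, Finset.sum_comm]
    have : ∀ z, ∑ x, (∑ y, pr p (fun ω => (X ω, Y ω, Z ω)) (x, y, z)) * Real.log (pr p Z z)
        = -(negMulLog (pr p Z z)) := by
      intro z
      rw [Finset.sum_congr rfl fun x _ => by rw [m1 x z], ← Finset.sum_mul, mz z,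
        Real.negMulLog]
      ring
    rw [Finset.sum_congr rfl fun z _ => this z, ent, Finset.sum_neg_distrib]
  have final : ent p (fun ω => (X ω, Y ω, Z ω))
      = ent p (fun ω => (X ω, Z ω)) + ent p (fun ω => (Y ω, Z ω)) + -(ent p Z) := by
    rw [expand3, Finset.sum_congr rfl fun x _ => Finset.sum_congr rfl fun y _ =>
      Finset.sum_congr rfl fun z _ => key x y z]
    rw [← A, ← B, ← Csum]
    simp only [Finset.sum_add_distrib]
  linarith [final]

end EntL

/-- Under the Markov chain
`(S̃, X̃₁, X̃₂) → (U,A,B) → (X₁,X₂) → Y`, where `S̃ = (Ũ,Ã,B̃,Ỹ)` has the same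
joint law with `(X̃₁,X̃₂)` as `S = (U,A,B,Y)` with `(X₁,X₂)`:
`I(X₂; Y | U A B X₁) + I(X̃₂ B; Y | S̃ X̃₁ U A X₁) = I(X₂; Y | U A X₁ X̃₁ S̃)`. -/
theorem stmt2 {Ω 𝒳₁ 𝒳₂ 𝒰 𝒜 ℬ 𝒴 : Type*} [Fintype Ω]
    [Fintype 𝒳₁] [DecidableEq 𝒳₁] [Fintype 𝒳₂] [DecidableEq 𝒳₂]
    [Fintype 𝒰] [DecidableEq 𝒰] [Fintype 𝒜] [DecidableEq 𝒜]
    [Fintype ℬ] [DecidableEq ℬ] [Fintype 𝒴] [DecidableEq 𝒴]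
    (p : Ω → ℝ) (hp : IsPMF p)
    (Ut : Ω → 𝒰) (At : Ω → 𝒜) (Bt : Ω → ℬ) (Yt : Ω → 𝒴)
    (Xt1 : Ω → 𝒳₁) (Xt2 : Ω → 𝒳₂)
    (U : Ω → 𝒰) (A : Ω → 𝒜) (B : Ω → ℬ)
    (X1 : Ω → 𝒳₁) (X2 : Ω → 𝒳₂) (Y : Ω → 𝒴)
    -- Markov chain: (X₁,X₂) ⟂ (S̃,X̃₁,X̃₂) | (U,A,B), with S̃ = (Ũ,Ã,B̃,Ỹ)
    (hmc1 : CondIndep p (fun ω => (X1 ω, X2 ω))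
      (fun ω => ((Ut ω, At ω, Bt ω, Yt ω), Xt1 ω, Xt2 ω))
      (fun ω => (U ω, A ω, B ω)))
    -- Markov chain: Y ⟂ (S̃,X̃₁,X̃₂,U,A,B) | (X₁,X₂)
    (hmc2 : CondIndep p Y
      (fun ω => ((Ut ω, At ω, Bt ω, Yt ω), Xt1 ω, Xt2 ω, U ω, A ω, B ω))
      (fun ω => (X1 ω, X2 ω)))
    -- (S̃, X̃₁, X̃₂) has the same distribution as (S, X₁, X₂) with S = (U,A,B,Y)
    (hmarg : ∀ (s : 𝒰 × 𝒜 × ℬ × 𝒴) (x1 : 𝒳₁) (x2 : 𝒳₂),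
      pr p (fun ω => ((Ut ω, At ω, Bt ω, Yt ω), Xt1 ω, Xt2 ω)) (s, x1, x2)
        = pr p (fun ω => ((U ω, A ω, B ω, Y ω), X1 ω, X2 ω)) (s, x1, x2)) :
    condMI p X2 Y (fun ω => (U ω, A ω, B ω, X1 ω))
      + condMI p (fun ω => (Xt2 ω, B ω)) Y
          (fun ω => ((Ut ω, At ω, Bt ω, Yt ω), Xt1 ω, U ω, A ω, X1 ω))
      = condMI p X2 Y
          (fun ω => (U ω, A ω, X1 ω, Xt1 ω, (Ut ω, At ω, Bt ω, Yt ω))) := by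
  have hp0 := hp.1
  -- contraction of the two Markov chains
  have K0 : CondIndep p (fun ω => ((X1 ω, X2 ω), Y ω))
      (fun ω => ((Ut ω, At ω, Bt ω, Yt ω), Xt1 ω, Xt2 ω))
      (fun ω => (U ω, A ω, B ω)) := by
    refine condIndep_contraction hp0 hmc1 ?_
    exact condIndep_comp_right
      (fun t : (𝒰 × 𝒜 × ℬ × 𝒴) × 𝒳₁ × 𝒳₂ × 𝒰 × 𝒜 × ℬ =>
        ((t.1, t.2.1, t.2.2.1), (t.2.2.2.1, t.2.2.2.2.1, t.2.2.2.2.2))) hmc2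
  have L1 : ent p (fun ω => ((X1 ω, X2 ω), ((Ut ω, At ω, Bt ω, Yt ω), Xt1 ω, Xt2 ω), U ω, A ω, B ω))
        + ent p (fun ω => (U ω, A ω, B ω))
      = ent p (fun ω => ((X1 ω, X2 ω), U ω, A ω, B ω))
        + ent p (fun ω => (((Ut ω, At ω, Bt ω, Yt ω), Xt1 ω, Xt2 ω), U ω, A ω, B ω)) :=
    ent_condIndep p hp _ _ _ (condIndep_comp_left (fun t : (𝒳₁ × 𝒳₂) × 𝒴 => t.1) K0)
  have L2 : ent p (fun ω => ((X1 ω, Y ω), ((Ut ω, At ω, Bt ω, Yt ω), Xt1 ω, Xt2 ω), U ω, A ω, B ω))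
        + ent p (fun ω => (U ω, A ω, B ω))
      = ent p (fun ω => ((X1 ω, Y ω), U ω, A ω, B ω))
        + ent p (fun ω => (((Ut ω, At ω, Bt ω, Yt ω), Xt1 ω, Xt2 ω), U ω, A ω, B ω)) :=
    ent_condIndep p hp _ _ _ (condIndep_comp_left (fun t : (𝒳₁ × 𝒳₂) × 𝒴 => (t.1.1, t.2)) K0)
  have L3 : ent p (fun ω => (((X1 ω, X2 ω), Y ω), ((Ut ω, At ω, Bt ω, Yt ω), Xt1 ω, Xt2 ω), U ω, A ω, B ω))
        + ent p (fun ω => (U ω, A ω, B ω))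
      = ent p (fun ω => (((X1 ω, X2 ω), Y ω), U ω, A ω, B ω))
        + ent p (fun ω => (((Ut ω, At ω, Bt ω, Yt ω), Xt1 ω, Xt2 ω), U ω, A ω, B ω)) :=
    ent_condIndep p hp _ _ _ K0
  have L4 : ent p (fun ω => (X1 ω, ((Ut ω, At ω, Bt ω, Yt ω), Xt1 ω, Xt2 ω), U ω, A ω, B ω))
        + ent p (fun ω => (U ω, A ω, B ω))
      = ent p (fun ω => (X1 ω, U ω, A ω, B ω))
        + ent p (fun ω => (((Ut ω, At ω, Bt ω, Yt ω), Xt1 ω, Xt2 ω), U ω, A ω, B ω)) :=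
    ent_condIndep p hp _ _ _ (condIndep_comp_left (fun t : (𝒳₁ × 𝒳₂) × 𝒴 => t.1.1) K0)
  have step1 : CondIndep p Y
      (fun ω => ((Xt2 ω, B ω), ((Ut ω, At ω, Bt ω, Yt ω), Xt1 ω, U ω, A ω)))
      (fun ω => (X1 ω, X2 ω)) :=
    condIndep_comp_right
      (fun t : (𝒰 × 𝒜 × ℬ × 𝒴) × 𝒳₁ × 𝒳₂ × 𝒰 × 𝒜 × ℬ =>
        ((t.2.2.1, t.2.2.2.2.2), (t.1, t.2.1, t.2.2.2.1, t.2.2.2.2.1))) hmc2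
  have step2 : CondIndep p (fun ω => (Xt2 ω, B ω)) Y
      (fun ω => (((Ut ω, At ω, Bt ω, Yt ω), Xt1 ω, U ω, A ω), (X1 ω, X2 ω))) :=
    condIndep_symm (condIndep_weakUnion hp0 step1)
  have L5 : ent p (fun ω => ((Xt2 ω, B ω), Y ω,
        (((Ut ω, At ω, Bt ω, Yt ω), Xt1 ω, U ω, A ω), (X1 ω, X2 ω))))
        + ent p (fun ω => (((Ut ω, At ω, Bt ω, Yt ω), Xt1 ω, U ω, A ω), (X1 ω, X2 ω)))
      = ent p (fun ω => ((Xt2 ω, B ω), (((Ut ω, At ω, Bt ω, Yt ω), Xt1 ω, U ω, A ω), (X1 ω, X2 ω))))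
        + ent p (fun ω => (Y ω, (((Ut ω, At ω, Bt ω, Yt ω), Xt1 ω, U ω, A ω), (X1 ω, X2 ω)))) :=
    ent_condIndep p hp _ _ _ step2
  -- relabelings of entropies
  have r1 : ent p (fun ω => (X2 ω, U ω, A ω, B ω, X1 ω))
      = ent p (fun ω => ((X1 ω, X2 ω), U ω, A ω, B ω)) :=
    ent_congr p (fun ⟨⟨x1, x2⟩, u, a, b⟩ => (x2, u, a, b, x1))
      (fun ⟨x2, u, a, b, x1⟩ => ((x1, x2), u, a, b))
      (by rintro ⟨⟨x1, x2⟩, u, a, b⟩; rfl) (fun ω => rfl)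
  have r2 : ent p (fun ω => (Y ω, U ω, A ω, B ω, X1 ω))
      = ent p (fun ω => ((X1 ω, Y ω), U ω, A ω, B ω)) :=
    ent_congr p (fun ⟨⟨x1, y⟩, u, a, b⟩ => (y, u, a, b, x1))
      (fun ⟨y, u, a, b, x1⟩ => ((x1, y), u, a, b))
      (by rintro ⟨⟨x1, y⟩, u, a, b⟩; rfl) (fun ω => rfl)
  have r3 : ent p (fun ω => (X2 ω, Y ω, U ω, A ω, B ω, X1 ω))
      = ent p (fun ω => (((X1 ω, X2 ω), Y ω), U ω, A ω, B ω)) :=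
    ent_congr p (fun ⟨⟨⟨x1, x2⟩, y⟩, u, a, b⟩ => (x2, y, u, a, b, x1))
      (fun ⟨x2, y, u, a, b, x1⟩ => (((x1, x2), y), u, a, b))
      (by rintro ⟨⟨⟨x1, x2⟩, y⟩, u, a, b⟩; rfl) (fun ω => rfl)
  have r4 : ent p (fun ω => (U ω, A ω, B ω, X1 ω))
      = ent p (fun ω => (X1 ω, U ω, A ω, B ω)) :=
    ent_congr p (fun ⟨x1, u, a, b⟩ => (u, a, b, x1))
      (fun ⟨u, a, b, x1⟩ => (x1, u, a, b))
      (by rintro ⟨x1, u, a, b⟩; rfl) (fun ω => rfl)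
  have r5 : ent p (fun ω => ((Xt2 ω, B ω), (Ut ω, At ω, Bt ω, Yt ω), Xt1 ω, U ω, A ω, X1 ω))
      = ent p (fun ω => (X1 ω, ((Ut ω, At ω, Bt ω, Yt ω), Xt1 ω, Xt2 ω), U ω, A ω, B ω)) :=
    ent_congr p (fun ⟨x1, ⟨s, xt1, xt2⟩, u, a, b⟩ => ((xt2, b), s, xt1, u, a, x1))
      (fun ⟨⟨xt2, b⟩, s, xt1, u, a, x1⟩ => (x1, (s, xt1, xt2), u, a, b))
      (by rintro ⟨x1, ⟨s, xt1, xt2⟩, u, a, b⟩; rfl) (fun ω => rfl)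
  have r6 : ent p (fun ω => (Y ω, (Ut ω, At ω, Bt ω, Yt ω), Xt1 ω, U ω, A ω, X1 ω))
      = ent p (fun ω => (Y ω, U ω, A ω, X1 ω, Xt1 ω, (Ut ω, At ω, Bt ω, Yt ω))) :=
    ent_congr p (fun ⟨y, u, a, x1, xt1, s⟩ => (y, s, xt1, u, a, x1))
      (fun ⟨y, s, xt1, u, a, x1⟩ => (y, u, a, x1, xt1, s))
      (by rintro ⟨y, u, a, x1, xt1, s⟩; rfl) (fun ω => rfl)
  have r7 : ent p (fun ω => ((Xt2 ω, B ω), Y ω, (Ut ω, At ω, Bt ω, Yt ω), Xt1 ω, U ω, A ω, X1 ω))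
      = ent p (fun ω => ((X1 ω, Y ω), ((Ut ω, At ω, Bt ω, Yt ω), Xt1 ω, Xt2 ω), U ω, A ω, B ω)) :=
    ent_congr p (fun ⟨⟨x1, y⟩, ⟨s, xt1, xt2⟩, u, a, b⟩ => ((xt2, b), y, s, xt1, u, a, x1))
      (fun ⟨⟨xt2, b⟩, y, s, xt1, u, a, x1⟩ => ((x1, y), (s, xt1, xt2), u, a, b))
      (by rintro ⟨⟨x1, y⟩, ⟨s, xt1, xt2⟩, u, a, b⟩; rfl) (fun ω => rfl)
  have r8 : ent p (fun ω => ((Ut ω, At ω, Bt ω, Yt ω), Xt1 ω, U ω, A ω, X1 ω))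
      = ent p (fun ω => (U ω, A ω, X1 ω, Xt1 ω, (Ut ω, At ω, Bt ω, Yt ω))) :=
    ent_congr p (fun ⟨u, a, x1, xt1, s⟩ => (s, xt1, u, a, x1))
      (fun ⟨s, xt1, u, a, x1⟩ => (u, a, x1, xt1, s))
      (by rintro ⟨u, a, x1, xt1, s⟩; rfl) (fun ω => rfl)
  have r9 : ent p (fun ω => (X2 ω, U ω, A ω, X1 ω, Xt1 ω, (Ut ω, At ω, Bt ω, Yt ω)))
      = ent p (fun ω => (((Ut ω, At ω, Bt ω, Yt ω), Xt1 ω, U ω, A ω), (X1 ω, X2 ω))) :=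
    ent_congr p (fun ⟨⟨s, xt1, u, a⟩, x1, x2⟩ => (x2, u, a, x1, xt1, s))
      (fun ⟨x2, u, a, x1, xt1, s⟩ => ((s, xt1, u, a), (x1, x2)))
      (by rintro ⟨⟨s, xt1, u, a⟩, x1, x2⟩; rfl) (fun ω => rfl)
  have r10 : ent p (fun ω => (X2 ω, Y ω, U ω, A ω, X1 ω, Xt1 ω, (Ut ω, At ω, Bt ω, Yt ω)))
      = ent p (fun ω => (Y ω, (((Ut ω, At ω, Bt ω, Yt ω), Xt1 ω, U ω, A ω), (X1 ω, X2 ω)))) :=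
    ent_congr p (fun ⟨y, ⟨s, xt1, u, a⟩, x1, x2⟩ => (x2, y, u, a, x1, xt1, s))
      (fun ⟨x2, y, u, a, x1, xt1, s⟩ => (y, (s, xt1, u, a), (x1, x2)))
      (by rintro ⟨y, ⟨s, xt1, u, a⟩, x1, x2⟩; rfl) (fun ω => rfl)
  have r11 : ent p (fun ω => ((Xt2 ω, B ω), Y ω,
        (((Ut ω, At ω, Bt ω, Yt ω), Xt1 ω, U ω, A ω), (X1 ω, X2 ω))))
      = ent p (fun ω => (((X1 ω, X2 ω), Y ω), ((Ut ω, At ω, Bt ω, Yt ω), Xt1 ω, Xt2 ω), U ω, A ω, B ω)) :=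
    ent_congr p (fun ⟨⟨⟨x1, x2⟩, y⟩, ⟨s, xt1, xt2⟩, u, a, b⟩ => ((xt2, b), y, (s, xt1, u, a), (x1, x2)))
      (fun ⟨⟨xt2, b⟩, y, ⟨s, xt1, u, a⟩, x1, x2⟩ => (((x1, x2), y), (s, xt1, xt2), u, a, b))
      (by rintro ⟨⟨⟨x1, x2⟩, y⟩, ⟨s, xt1, xt2⟩, u, a, b⟩; rfl) (fun ω => rfl)
  have r12 : ent p (fun ω => ((Xt2 ω, B ω),
        (((Ut ω, At ω, Bt ω, Yt ω), Xt1 ω, U ω, A ω), (X1 ω, X2 ω))))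
      = ent p (fun ω => ((X1 ω, X2 ω), ((Ut ω, At ω, Bt ω, Yt ω), Xt1 ω, Xt2 ω), U ω, A ω, B ω)) :=
    ent_congr p (fun ⟨⟨x1, x2⟩, ⟨s, xt1, xt2⟩, u, a, b⟩ => ((xt2, b), (s, xt1, u, a), (x1, x2)))
      (fun ⟨⟨xt2, b⟩, ⟨s, xt1, u, a⟩, x1, x2⟩ => ((x1, x2), (s, xt1, xt2), u, a, b))
      (by rintro ⟨⟨x1, x2⟩, ⟨s, xt1, xt2⟩, u, a, b⟩; rfl) (fun ω => rfl)
  simp only [condMI]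
  linarith [L1, L2, L3, L4, L5, r1, r2, r3, r4, r5, r6, r7, r8, r9, r10, r11, r12]
end

section
/- Under the Markov chain (S̃, X̃₁, X̃₂) → (U,A,B) → (X₁,X₂) → Y with additionally X₁ ⟂ X₂ | (U,A,B) and U ⟂ (A,B), the following entropy identity holds: H(X̃₂ | Ũ B̃) + H(B | S̃ X̃₂) − H(X̃₂ B | S̃ X̃₁ U A Y) = I(X̃₂; Ỹ | Ũ Ã B̃ X̃₁) + I(B; Y | S̃ X̃₁ U A), where S̃ = (Ũ, Ã, B̃, Ỹ) and the joint law of (S̃, X̃₁, X̃₂) equals that of ((U,A,B,Y), X₁, X₂). -/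
open scoped BigOperators

/-
Expanding both sides by the chain rule, the identity reduces to four Markov properties of the
factorized law, each of which lets one drop a conditioning variable from a conditional entropy:
`X₂ ⟂ (A, X₁) | (U, B)`, transported by the equality of laws to `X̃₂ ⟂ (Ã, X̃₁) | (Ũ, B̃)`;
`X̃₂ ⟂ (U, A) | (S̃, X̃₁)`; `B ⟂ (X̃₁, U, A) | (S̃, X̃₂)`; and `X̃₂ ⟂ Y | (S̃, X̃₁, U, A, B)`.
Each is read off from the joint law of the triple, which factors as `f x z * g y z`.
-/

namespace MACFB

section Entropy

variable {Ω α β γ : Type*} [Fintype Ω] {p : Ω → ℝ}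

theorem pr_self_pos [DecidableEq α] (hp : ∀ ω, 0 ≤ p ω) {ω : Ω} (hω : 0 < p ω) (X : Ω → α) :
    0 < pr p X (X ω) := by
  have := Finset.single_le_sum (f := fun ω' => if X ω' = X ω then p ω' else 0)
    (fun ω' _ => by split_ifs <;> simp [hp]) (Finset.mem_univ ω)
  exact hω.trans_le (by simpa [pr] using this)

theorem ent_eq_neg_sum_mul_log_pr [Fintype α] [DecidableEq α] (X : Ω → α) :
    ent p X = -∑ ω, p ω * Real.log (pr p X (X ω)) := by
  have h : ∀ a, pr p X a * Real.log (pr p X a)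
      = ∑ ω, if X ω = a then p ω * Real.log (pr p X (X ω)) else 0 := by
    intro a
    nth_rewrite 1 [pr]
    rw [Finset.sum_mul]
    refine Finset.sum_congr rfl fun ω _ => ?_
    split_ifs with hω
    · rw [hω]
    · rw [zero_mul]
  simp only [ent, Real.negMulLog, neg_mul, Finset.sum_neg_distrib, h]
  rw [Finset.sum_comm]
  simp

theorem ent_congr_of_fibers [Fintype α] [DecidableEq α] [Fintype β] [DecidableEq β]
    {X : Ω → α} {Y : Ω → β} (h : ∀ ω ω', X ω = X ω' ↔ Y ω = Y ω') : ent p X = ent p Y := by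
  simp only [ent_eq_neg_sum_mul_log_pr, pr, h]

theorem condEnt_congr_of_fibers [Fintype α] [DecidableEq α] [Fintype β] [DecidableEq β]
    [Fintype γ] [DecidableEq γ] (X : Ω → α) {Z : Ω → β} {Z' : Ω → γ}
    (h : ∀ ω ω', Z ω = Z ω' ↔ Z' ω = Z' ω') : condEnt p X Z = condEnt p X Z' := by
  unfold condEnt
  rw [ent_congr_of_fibers h, ent_congr_of_fibers (Y := fun ω => (X ω, Z' ω))]
  intro ω ω'
  simp only [Prod.mk.injEq, h]

theorem pr_comp_eq_sum [Fintype α] [DecidableEq α] [DecidableEq β]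
    (V : Ω → α) (f : α → β) (b : β) :
    pr p (fun ω => f (V ω)) b = ∑ a, if f a = b then pr p V a else 0 := by
  have h : ∀ a, (if f a = b then pr p V a else 0)
      = ∑ ω, if V ω = a then (if f a = b then p ω else 0) else 0 := by
    intro a
    split_ifs <;> simp [pr]
  rw [Finset.sum_congr rfl fun a _ => h a, Finset.sum_comm]
  simp [pr]

theorem pr_comp_congr [Fintype α] [DecidableEq α] [DecidableEq β] {V W : Ω → α}
    (h : ∀ a, pr p V a = pr p W a) (f : α → β) (b : β) :
    pr p (fun ω => f (V ω)) b = pr p (fun ω => f (W ω)) b := by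
  simp only [pr_comp_eq_sum, h]

theorem condEnt_comp_congr [Fintype α] [DecidableEq α] [Fintype β] [DecidableEq β]
    [Fintype γ] [DecidableEq γ] {V W : Ω → α}
    (h : ∀ a, pr p V a = pr p W a) (f : α → β) (g : α → γ) :
    condEnt p (fun ω => f (V ω)) (fun ω => g (V ω))
      = condEnt p (fun ω => f (W ω)) (fun ω => g (W ω)) := by
  simp only [condEnt, ent, pr_comp_congr h (fun a => (f a, g a)), pr_comp_congr h g]

variable [Fintype α] [DecidableEq α] [Fintype β] [DecidableEq β] [Fintype γ] [DecidableEq γ]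
  {X : Ω → α} {Y : Ω → β} {Z : Ω → γ}

theorem condIndep_of_pr_eq_mul (f : α → γ → ℝ) (g : β → γ → ℝ)
    (h : ∀ x y z, pr p (fun ω => (X ω, Y ω, Z ω)) (x, y, z) = f x z * g y z) :
    CondIndep p X Y Z := by
  intro x y z
  have hXZ : pr p (fun ω => (X ω, Z ω)) (x, z) = f x z * ∑ y, g y z := by
    rw [pr_comp_eq_sum (fun ω => (X ω, Y ω, Z ω)) (fun v => (v.1, v.2.2))]
    simp [Fintype.sum_prod_type, h, ite_and, Finset.mul_sum]
  have hYZ : pr p (fun ω => (Y ω, Z ω)) (y, z) = (∑ x, f x z) * g y z := by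
    rw [pr_comp_eq_sum (fun ω => (X ω, Y ω, Z ω)) (fun v => v.2)]
    simp [Fintype.sum_prod_type, h, Finset.sum_mul]
  have hZ : pr p Z z = (∑ x, f x z) * ∑ y, g y z := by
    rw [pr_comp_eq_sum (fun ω => (X ω, Y ω, Z ω)) (fun v => v.2.2)]
    simp [Fintype.sum_prod_type, h, Finset.sum_mul, Finset.mul_sum]
    exact Finset.sum_comm
  rw [h, hXZ, hYZ, hZ]
  ring

theorem CondIndep.ent_add_ent (hp : ∀ ω, 0 ≤ p ω) (h : CondIndep p X Y Z) :
    ent p (fun ω => (X ω, Y ω, Z ω)) + ent p Z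
      = ent p (fun ω => (X ω, Z ω)) + ent p (fun ω => (Y ω, Z ω)) := by
  simp only [ent_eq_neg_sum_mul_log_pr, ← neg_add, neg_inj, ← Finset.sum_add_distrib, ← mul_add]
  refine Finset.sum_congr rfl fun ω _ => ?_
  rcases (hp ω).eq_or_lt with hω | hω
  · simp [← hω]
  have hlog := congrArg Real.log (h (X ω) (Y ω) (Z ω))
  rw [Real.log_mul (pr_self_pos hp hω Z).ne' (pr_self_pos hp hω (fun ω => (X ω, Y ω, Z ω))).ne',
    Real.log_mul (pr_self_pos hp hω (fun ω => (X ω, Z ω))).ne'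
      (pr_self_pos hp hω (fun ω => (Y ω, Z ω))).ne'] at hlog
  rw [add_comm, hlog]

theorem condEnt_prod_eq_add (X : Ω → α) (Y : Ω → β) (Z : Ω → γ) :
    condEnt p (fun ω => (X ω, Y ω)) Z = condEnt p X Z + condEnt p Y (fun ω => (X ω, Z ω)) := by
  have h : ent p (fun ω => ((X ω, Y ω), Z ω)) = ent p (fun ω => (Y ω, X ω, Z ω)) :=
    ent_congr_of_fibers fun ω ω' => by simp only [Prod.mk.injEq]; tauto
  simp only [condEnt, h]
  ring

theorem condEnt_prod_comm (X : Ω → α) (Y : Ω → β) (Z : Ω → γ) :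
    condEnt p (fun ω => (X ω, Y ω)) Z = condEnt p (fun ω => (Y ω, X ω)) Z := by
  unfold condEnt
  congr 1
  exact ent_congr_of_fibers fun ω ω' => by simp only [Prod.mk.injEq]; tauto

theorem condMI_eq_condEnt_sub_condEnt (X : Ω → α) (Y : Ω → β) (Z : Ω → γ) :
    condMI p X Y Z = condEnt p X Z - condEnt p X (fun ω => (Y ω, Z ω)) := by
  simp only [condMI, condEnt]
  ring

theorem CondIndep.condEnt_eq (hp : ∀ ω, 0 ≤ p ω) (h : CondIndep p X Y Z) :
    condEnt p X (fun ω => (Y ω, Z ω)) = condEnt p X Z := by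
  have := h.ent_add_ent hp
  unfold condEnt
  linarith

end Entropy

end MACFB

set_option synthInstance.maxSize 512
set_option synthInstance.maxHeartbeats 400000

namespace MACFB.Scheme

variable {𝒰 𝒜 ℬ 𝒴 𝒳₁ 𝒳₂ : Type*}

/-- A sample point `((S̃, X̃₁, X̃₂), U, A, B, X₁, X₂, Y)` with `S̃ = (Ũ, Ã, B̃, Ỹ)`; below, a
trailing `t` in a coordinate's name stands for the tilde. -/
abbrev Sample (𝒰 𝒜 ℬ 𝒴 𝒳₁ 𝒳₂ : Type*) :=
  ((𝒰 × 𝒜 × ℬ × 𝒴) × 𝒳₁ × 𝒳₂) × 𝒰 × 𝒜 × ℬ × 𝒳₁ × 𝒳₂ × 𝒴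

section Coordinates

variable (ω : Sample 𝒰 𝒜 ℬ 𝒴 𝒳₁ 𝒳₂)

abbrev St : 𝒰 × 𝒜 × ℬ × 𝒴 := ω.1.1
abbrev Ut : 𝒰 := ω.1.1.1
abbrev At : 𝒜 := ω.1.1.2.1
abbrev Bt : ℬ := ω.1.1.2.2.1
abbrev Yt : 𝒴 := ω.1.1.2.2.2
abbrev Xt₁ : 𝒳₁ := ω.1.2.1
abbrev Xt₂ : 𝒳₂ := ω.1.2.2
abbrev U : 𝒰 := ω.2.1
abbrev A : 𝒜 := ω.2.2.1
abbrev B : ℬ := ω.2.2.2.1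
abbrev X₁ : 𝒳₁ := ω.2.2.2.2.1
abbrev X₂ : 𝒳₂ := ω.2.2.2.2.2.1
abbrev Y : 𝒴 := ω.2.2.2.2.2.2

end Coordinates

def jointPMF (Pt : (𝒰 × 𝒜 × ℬ × 𝒴) × 𝒳₁ × 𝒳₂ → ℝ) (QA : (𝒰 × 𝒜 × ℬ × 𝒴) → 𝒳₁ → 𝒜 → ℝ)
    (QB : (𝒰 × 𝒜 × ℬ × 𝒴) → 𝒳₂ → ℬ → ℝ) (PU : 𝒰 → ℝ) (PX1 : 𝒰 → 𝒜 → 𝒳₁ → ℝ)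
    (PX2 : 𝒰 → ℬ → 𝒳₂ → ℝ) (PY : 𝒳₁ → 𝒳₂ → 𝒴 → ℝ) (ω : Sample 𝒰 𝒜 ℬ 𝒴 𝒳₁ 𝒳₂) : ℝ :=
  Pt ω.1 * QA (St ω) (Xt₁ ω) (A ω) * QB (St ω) (Xt₂ ω) (B ω) * PU (U ω)
    * PX1 (U ω) (A ω) (X₁ ω) * PX2 (U ω) (B ω) (X₂ ω) * PY (X₁ ω) (X₂ ω) (Y ω)

variable {Pt : (𝒰 × 𝒜 × ℬ × 𝒴) × 𝒳₁ × 𝒳₂ → ℝ} {QA : (𝒰 × 𝒜 × ℬ × 𝒴) → 𝒳₁ → 𝒜 → ℝ}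
  {QB : (𝒰 × 𝒜 × ℬ × 𝒴) → 𝒳₂ → ℬ → ℝ} {PU : 𝒰 → ℝ} {PX1 : 𝒰 → 𝒜 → 𝒳₁ → ℝ}
  {PX2 : 𝒰 → ℬ → 𝒳₂ → ℝ} {PY : 𝒳₁ → 𝒳₂ → 𝒴 → ℝ}

local notation "P" => jointPMF Pt QA QB PU PX1 PX2 PY

theorem jointPMF_nonneg (hPt : ∀ v, 0 ≤ Pt v) (hQA : ∀ s t₁ a, 0 ≤ QA s t₁ a)
    (hQB : ∀ s t₂ b, 0 ≤ QB s t₂ b) (hPU : ∀ u, 0 ≤ PU u) (hPX1 : ∀ u a x₁, 0 ≤ PX1 u a x₁)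
    (hPX2 : ∀ u b x₂, 0 ≤ PX2 u b x₂) (hPY : ∀ x₁ x₂ y, 0 ≤ PY x₁ x₂ y) (ω) : 0 ≤ P ω := by
  unfold jointPMF
  apply_rules [mul_nonneg]

variable [Fintype 𝒰] [DecidableEq 𝒰] [Fintype 𝒜] [DecidableEq 𝒜] [Fintype ℬ] [DecidableEq ℬ]
  [Fintype 𝒴] [Fintype 𝒳₁] [DecidableEq 𝒳₁] [Fintype 𝒳₂] [DecidableEq 𝒳₂]

theorem condIndep_X₂_AX₁ (hPY : ∀ x₁ x₂, ∑ y, PY x₁ x₂ y = 1) :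
    CondIndep P X₂ (fun ω => (A ω, X₁ ω)) (fun ω => (U ω, B ω)) := by
  refine condIndep_of_pr_eq_mul (fun x₂ ub => PX2 ub.1 ub.2 x₂)
    (fun ax₁ ub => (∑ s, ∑ t₁, ∑ t₂, Pt (s, t₁, t₂) * QA s t₁ ax₁.1 * QB s t₂ ub.2)
      * PU ub.1 * PX1 ub.1 ax₁.1 ax₁.2) ?_
  rintro x₂ ⟨a, x₁⟩ ⟨u, b⟩
  simp only [pr, jointPMF, St, Xt₁, Xt₂, U, A, B, X₁, X₂, Y]
  simp only [Fintype.sum_prod_type, Prod.mk.injEq, ite_and, Finset.sum_ite_irrel,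
    Finset.sum_const_zero, Finset.sum_ite_eq', Finset.mem_univ, if_true,
    ← Finset.mul_sum, ← Finset.sum_mul, hPY, mul_one]
  ring

variable [DecidableEq 𝒴]

theorem condIndep_B_Xt₁UA (hPX1 : ∀ u a, ∑ x₁, PX1 u a x₁ = 1) (hPX2 : ∀ u b, ∑ x₂, PX2 u b x₂ = 1)
    (hPY : ∀ x₁ x₂, ∑ y, PY x₁ x₂ y = 1) :
    CondIndep P B (fun ω => (Xt₁ ω, U ω, A ω)) (fun ω => (St ω, Xt₂ ω)) := by
  refine condIndep_of_pr_eq_mul (fun b st₂ => QB st₂.1 st₂.2 b)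
    (fun t₁ua st₂ => Pt (st₂.1, t₁ua.1, st₂.2) * QA st₂.1 t₁ua.1 t₁ua.2.2 * PU t₁ua.2.1) ?_
  rintro b ⟨t₁, u, a⟩ ⟨⟨s₁, s₂, s₃, s₄⟩, t₂⟩
  simp only [pr, jointPMF, St, Xt₁, Xt₂, U, A, B, X₁, X₂, Y]
  simp only [Fintype.sum_prod_type, Prod.mk.injEq, ite_and, Finset.sum_ite_irrel,
    Finset.sum_const_zero, Finset.sum_ite_eq', Finset.mem_univ, if_true,
    ← Finset.mul_sum, hPX1, hPX2, hPY, mul_one]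
  ring

theorem condIndep_Xt₂_UA (hQB : ∀ s t₂, ∑ b, QB s t₂ b = 1) (hPX1 : ∀ u a, ∑ x₁, PX1 u a x₁ = 1)
    (hPX2 : ∀ u b, ∑ x₂, PX2 u b x₂ = 1) (hPY : ∀ x₁ x₂, ∑ y, PY x₁ x₂ y = 1) :
    CondIndep P Xt₂ (fun ω => (U ω, A ω)) (fun ω => (St ω, Xt₁ ω)) := by
  refine condIndep_of_pr_eq_mul (fun t₂ st₁ => Pt (st₁.1, st₁.2, t₂))
    (fun ua st₁ => QA st₁.1 st₁.2 ua.2 * PU ua.1) ?_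
  rintro t₂ ⟨u, a⟩ ⟨⟨s₁, s₂, s₃, s₄⟩, t₁⟩
  simp only [pr, jointPMF, St, Xt₁, Xt₂, U, A, B, X₁, X₂, Y]
  simp only [Fintype.sum_prod_type, Prod.mk.injEq, ite_and, Finset.sum_ite_irrel,
    Finset.sum_const_zero, Finset.sum_ite_eq', Finset.mem_univ, if_true,
    ← Finset.mul_sum, ← Finset.sum_mul, hQB, hPX1, hPX2, hPY, mul_one]
  ring

theorem condIndep_Xt₂_Y :
    CondIndep P Xt₂ Y (fun ω => (B ω, St ω, Xt₁ ω, U ω, A ω)) := by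
  refine condIndep_of_pr_eq_mul (fun t₂ z => Pt (z.2.1, z.2.2.1, t₂) * QB z.2.1 t₂ z.1)
    (fun y z => QA z.2.1 z.2.2.1 z.2.2.2.2 * PU z.2.2.2.1
      * ∑ x₁, ∑ x₂, PX1 z.2.2.2.1 z.2.2.2.2 x₁ * PX2 z.2.2.2.1 z.1 x₂ * PY x₁ x₂ y) ?_
  rintro t₂ y ⟨b, ⟨s₁, s₂, s₃, s₄⟩, t₁, u, a⟩
  simp only [pr, jointPMF, St, Xt₁, Xt₂, U, A, B, X₁, X₂, Y]
  simp only [Fintype.sum_prod_type, Prod.mk.injEq, ite_and, Finset.sum_ite_irrel,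
    Finset.sum_const_zero, Finset.sum_ite_eq', Finset.mem_univ, if_true, Finset.mul_sum]
  exact Finset.sum_congr rfl fun _ _ => Finset.sum_congr rfl fun _ _ => by ring

theorem condEnt_Xt₂_UtBt (hP : ∀ ω, 0 ≤ P ω) (hPY : ∀ x₁ x₂, ∑ y, PY x₁ x₂ y = 1)
    (hlaw : ∀ v, pr P (fun ω => ω.1) v = pr P (fun ω => ((U ω, A ω, B ω, Y ω), X₁ ω, X₂ ω)) v) :
    condEnt P Xt₂ (fun ω => (Ut ω, Bt ω)) = condEnt P Xt₂ (fun ω => (Ut ω, At ω, Bt ω, Xt₁ ω)) :=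
  calc condEnt P Xt₂ (fun ω => (Ut ω, Bt ω))
      = condEnt P X₂ (fun ω => (U ω, B ω)) :=
        condEnt_comp_congr hlaw (fun v => v.2.2) (fun v => (v.1.1, v.1.2.2.1))
    _ = condEnt P X₂ (fun ω => ((A ω, X₁ ω), U ω, B ω)) :=
        ((condIndep_X₂_AX₁ hPY).condEnt_eq hP).symm
    _ = condEnt P X₂ (fun ω => (U ω, A ω, B ω, X₁ ω)) :=
        condEnt_congr_of_fibers _ fun ω ω' => by simp only [Prod.ext_iff]; tauto
    _ = condEnt P Xt₂ (fun ω => (Ut ω, At ω, Bt ω, Xt₁ ω)) :=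
        (condEnt_comp_congr hlaw (fun v => v.2.2)
          (fun v => (v.1.1, v.1.2.1, v.1.2.2.1, v.2.1))).symm

theorem condEnt_Xt₂_StXt₁UA (hP : ∀ ω, 0 ≤ P ω) (hQB : ∀ s t₂, ∑ b, QB s t₂ b = 1)
    (hPX1 : ∀ u a, ∑ x₁, PX1 u a x₁ = 1) (hPX2 : ∀ u b, ∑ x₂, PX2 u b x₂ = 1)
    (hPY : ∀ x₁ x₂, ∑ y, PY x₁ x₂ y = 1) :
    condEnt P Xt₂ (fun ω => (St ω, Xt₁ ω, U ω, A ω))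
      = condEnt P Xt₂ (fun ω => (Yt ω, Ut ω, At ω, Bt ω, Xt₁ ω)) :=
  calc condEnt P Xt₂ (fun ω => (St ω, Xt₁ ω, U ω, A ω))
      = condEnt P Xt₂ (fun ω => ((U ω, A ω), St ω, Xt₁ ω)) :=
        condEnt_congr_of_fibers _ fun ω ω' => by simp only [Prod.ext_iff]; tauto
    _ = condEnt P Xt₂ (fun ω => (St ω, Xt₁ ω)) :=
        (condIndep_Xt₂_UA hQB hPX1 hPX2 hPY).condEnt_eq hP
    _ = condEnt P Xt₂ (fun ω => (Yt ω, Ut ω, At ω, Bt ω, Xt₁ ω)) :=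
        condEnt_congr_of_fibers _ fun ω ω' => by simp only [Prod.ext_iff]; tauto

theorem condEnt_B_StXt₂ (hP : ∀ ω, 0 ≤ P ω) (hPX1 : ∀ u a, ∑ x₁, PX1 u a x₁ = 1)
    (hPX2 : ∀ u b, ∑ x₂, PX2 u b x₂ = 1) (hPY : ∀ x₁ x₂, ∑ y, PY x₁ x₂ y = 1) :
    condEnt P B (fun ω => (St ω, Xt₂ ω))
      = condEnt P (fun ω => (Xt₂ ω, B ω)) (fun ω => (St ω, Xt₁ ω, U ω, A ω))
        - condEnt P Xt₂ (fun ω => (St ω, Xt₁ ω, U ω, A ω)) := by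
  rw [condEnt_prod_eq_add, add_sub_cancel_left]
  calc condEnt P B (fun ω => (St ω, Xt₂ ω))
      = condEnt P B (fun ω => ((Xt₁ ω, U ω, A ω), St ω, Xt₂ ω)) :=
        ((condIndep_B_Xt₁UA hPX1 hPX2 hPY).condEnt_eq hP).symm
    _ = condEnt P B (fun ω => (Xt₂ ω, St ω, Xt₁ ω, U ω, A ω)) :=
        condEnt_congr_of_fibers _ fun ω ω' => by simp only [Prod.ext_iff]; tauto

theorem condEnt_Xt₂B_StXt₁UAY (hP : ∀ ω, 0 ≤ P ω) :
    condEnt P (fun ω => (Xt₂ ω, B ω)) (fun ω => (St ω, Xt₁ ω, U ω, A ω, Y ω))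
      = condEnt P (fun ω => (Xt₂ ω, B ω)) (fun ω => (St ω, Xt₁ ω, U ω, A ω))
        - condMI P B Y (fun ω => (St ω, Xt₁ ω, U ω, A ω)) := by
  have hB : condEnt P B (fun ω => (St ω, Xt₁ ω, U ω, A ω, Y ω))
      = condEnt P B (fun ω => (Y ω, St ω, Xt₁ ω, U ω, A ω)) :=
    condEnt_congr_of_fibers _ fun ω ω' => by simp only [Prod.ext_iff]; tauto
  have hXt₂ : condEnt P Xt₂ (fun ω => (B ω, St ω, Xt₁ ω, U ω, A ω, Y ω))
      = condEnt P Xt₂ (fun ω => (B ω, St ω, Xt₁ ω, U ω, A ω)) :=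
    calc condEnt P Xt₂ (fun ω => (B ω, St ω, Xt₁ ω, U ω, A ω, Y ω))
        = condEnt P Xt₂ (fun ω => (Y ω, B ω, St ω, Xt₁ ω, U ω, A ω)) :=
          condEnt_congr_of_fibers _ fun ω ω' => by simp only [Prod.ext_iff]; tauto
      _ = condEnt P Xt₂ (fun ω => (B ω, St ω, Xt₁ ω, U ω, A ω)) :=
          condIndep_Xt₂_Y.condEnt_eq hP
  rw [condMI_eq_condEnt_sub_condEnt, condEnt_prod_comm Xt₂ B, condEnt_prod_comm Xt₂ B,
    condEnt_prod_eq_add B Xt₂, condEnt_prod_eq_add B Xt₂, hB, hXt₂]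
  ring

end MACFB.Scheme

open MACFB

/-- Under the full factorization
`P_{S̃X̃₁X̃₂} · Q_{A|S̃X̃₁} · Q_{B|S̃X̃₂} · P_U · P_{X₁|UA} · P_{X₂|UB} · P_{Y|X₁X₂}`
(with `S̃ = (Ũ,Ã,B̃,Ỹ)`), together with the marginal equality between the laws
of `(S̃,X̃₁,X̃₂)` and `((U,A,B,Y),X₁,X₂)`:
`H(X̃₂|ŨB̃) + H(B|S̃X̃₂) − H(X̃₂B|S̃X̃₁UAY) = I(X̃₂;Ỹ|ŨÃB̃X̃₁) + I(B;Y|S̃X̃₁UA)`. -/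
theorem stmt11 {𝒰 𝒜 ℬ 𝒴 𝒳₁ 𝒳₂ : Type*}
    [Fintype 𝒰] [DecidableEq 𝒰] [Fintype 𝒜] [DecidableEq 𝒜]
    [Fintype ℬ] [DecidableEq ℬ] [Fintype 𝒴] [DecidableEq 𝒴]
    [Fintype 𝒳₁] [DecidableEq 𝒳₁] [Fintype 𝒳₂] [DecidableEq 𝒳₂]
    (Pt : (𝒰 × 𝒜 × ℬ × 𝒴) × 𝒳₁ × 𝒳₂ → ℝ)
    (QA : (𝒰 × 𝒜 × ℬ × 𝒴) → 𝒳₁ → 𝒜 → ℝ)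
    (QB : (𝒰 × 𝒜 × ℬ × 𝒴) → 𝒳₂ → ℬ → ℝ)
    (PU : 𝒰 → ℝ) (PX1 : 𝒰 → 𝒜 → 𝒳₁ → ℝ) (PX2 : 𝒰 → ℬ → 𝒳₂ → ℝ)
    (PY : 𝒳₁ → 𝒳₂ → 𝒴 → ℝ)
    (hPt : IsPMF Pt)
    (hQA : ∀ s x, IsPMF (QA s x)) (hQB : ∀ s x, IsPMF (QB s x))
    (hPU : IsPMF PU) (hPX1 : ∀ u a, IsPMF (PX1 u a)) (hPX2 : ∀ u b, IsPMF (PX2 u b))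
    (hPY : ∀ x1 x2, IsPMF (PY x1 x2))
    -- the joint distribution on Ω, factorized as in the coding scheme
    (p : ((𝒰 × 𝒜 × ℬ × 𝒴) × 𝒳₁ × 𝒳₂) × 𝒰 × 𝒜 × ℬ × 𝒳₁ × 𝒳₂ × 𝒴 → ℝ)
    (hp : ∀ st xt1 xt2 u a b x1 x2 y,
      p ((st, xt1, xt2), u, a, b, x1, x2, y)
        = Pt (st, xt1, xt2) * QA st xt1 a * QB st xt2 b * PU u
            * PX1 u a x1 * PX2 u b x2 * PY x1 x2 y)
    -- the marginal of (S̃,X̃₁,X̃₂) equals the marginal of ((U,A,B,Y),X₁,X₂)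
    (hmarg : ∀ (s : 𝒰 × 𝒜 × ℬ × 𝒴) (x1 : 𝒳₁) (x2 : 𝒳₂),
      pr p (fun ω => ω.1) (s, x1, x2)
        = pr p (fun ω => ((ω.2.1, ω.2.2.1, ω.2.2.2.1, ω.2.2.2.2.2.2),
            ω.2.2.2.2.1, ω.2.2.2.2.2.1)) (s, x1, x2)) :
    condEnt p (fun ω => ω.1.2.2) (fun ω => (ω.1.1.1, ω.1.1.2.2.1))
      + condEnt p (fun ω => ω.2.2.2.1) (fun ω => (ω.1.1, ω.1.2.2))
      - condEnt p (fun ω => (ω.1.2.2, ω.2.2.2.1))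
          (fun ω => (ω.1.1, ω.1.2.1, ω.2.1, ω.2.2.1, ω.2.2.2.2.2.2))
      = condMI p (fun ω => ω.1.2.2) (fun ω => ω.1.1.2.2.2)
          (fun ω => (ω.1.1.1, ω.1.1.2.1, ω.1.1.2.2.1, ω.1.2.1))
        + condMI p (fun ω => ω.2.2.2.1) (fun ω => ω.2.2.2.2.2.2)
          (fun ω => (ω.1.1, ω.1.2.1, ω.2.1, ω.2.2.1)) := by
  obtain rfl : p = Scheme.jointPMF Pt QA QB PU PX1 PX2 PY :=
    funext fun ⟨⟨st, xt1, xt2⟩, u, a, b, x1, x2, y⟩ => hp st xt1 xt2 u a b x1 x2 y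
  have hP := Scheme.jointPMF_nonneg hPt.1 (fun s x => (hQA s x).1) (fun s x => (hQB s x).1)
    hPU.1 (fun u a => (hPX1 u a).1) (fun u b => (hPX2 u b).1) (fun x1 x2 => (hPY x1 x2).1)
  have hQB_sum s x := (hQB s x).2
  have hPX1_sum u a := (hPX1 u a).2
  have hPX2_sum u b := (hPX2 u b).2
  have hPY_sum x1 x2 := (hPY x1 x2).2
  have h₁ := Scheme.condEnt_Xt₂_UtBt hP hPY_sum fun v => hmarg v.1 v.2.1 v.2.2
  have h₂ := Scheme.condEnt_Xt₂_StXt₁UA hP hQB_sum hPX1_sum hPX2_sum hPY_sum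
  have h₃ := Scheme.condEnt_B_StXt₂ hP hPX1_sum hPX2_sum hPY_sum
  have h₄ := Scheme.condEnt_Xt₂B_StXt₁UAY hP
  simp only [condEnt, condMI] at h₁ h₂ h₃ h₄ ⊢
  linarith
end
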